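/- arXiv:2012.11181 — 2 statements merged into one kernel-verified Lean document; each statement's English description precedes it below -/
import Mathlib

section
/- Let m, l, g be points in ℝ² with ‖l − m‖ ≤ r + σ and ‖l − g‖ ≥ ρ, where ρ > 2r > 0 and σ ≤ r. Let φ' ∈ [0, φ] be the angle between the rays from l through m and from l through g, with φ ∈ (0, π/2] satisfying ρ cos φ > 2r. Then the angle θ' at m between the ray from l through m (extended beyond m) and the segment from m to g satisfies tan θ' ≤ (ρ sin φ)/(ρ cos φ − 2r). -/
open InnerProductGeometry Real
open scoped RealInnerProductSpace
set_option maxHeartbeats 800000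

private lemma aux_key (r ρ a b c s c' s' : ℝ)
    (hr : 0 < r) (ha0 : 0 < a) (ha2 : a ≤ 2 * r) (hb : ρ ≤ b)
    (hc : 0 < c) (hcc : c ≤ c') (hc1 : c' ≤ 1)
    (hs : 0 ≤ s) (hs' : 0 ≤ s')
    (hp : s' ^ 2 + c' ^ 2 = 1) (hq : s ^ 2 + c ^ 2 = 1)
    (hρc : 2 * r < ρ * c) :
    s' * (a * b) * (ρ * c - 2 * r) ≤ ρ * s * (c' * (a * b) - a ^ 2) := by
  have hρ0 : 0 < ρ := by nlinarith
  have hb0 : 0 < b := lt_of_lt_of_le hρ0 hb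
  have hs'le : s' ≤ s := by nlinarith
  have h1 : s' * (ρ * c - 2 * r) ≤ s * (ρ * c' - 2 * r) := by
    nlinarith [mul_nonneg (mul_nonneg hρ0.le hs) (sub_nonneg.2 hcc),
      mul_nonneg (sub_nonneg.2 hs'le) (by linarith : (0:ℝ) ≤ ρ * c - 2 * r)]
  have h2 : b * (s' * (ρ * c - 2 * r)) ≤ ρ * (s * (b * c' - 2 * r)) := by
    nlinarith [mul_le_mul_of_nonneg_left h1 hb0.le,
      mul_nonneg (mul_nonneg (sub_nonneg.2 hb) hs) (by linarith : (0:ℝ) ≤ 2 * r)]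
  nlinarith [mul_le_mul_of_nonneg_left h2 ha0.le,
    mul_nonneg (mul_nonneg (mul_nonneg hρ0.le hs) ha0.le) (sub_nonneg.2 ha2)]

/-- Bound on the angle `θ'` at the man `m` between the direction `l → m` (extended
beyond `m`) and the segment from `m` to the goal `g`, in terms of the data
`ρ, r, σ, φ` of the avoidance-move analysis. -/
theorem stmt_6 (r σ ρ φ : ℝ)
    (hr : 0 < r) (hσ : 0 ≤ σ) (hσr : σ ≤ r) (hρ : ρ > 2 * r)
    (hφ0 : 0 < φ) (hφπ : φ ≤ π / 2) (hφρ : ρ * Real.cos φ > 2 * r)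
    (l m g : EuclideanSpace ℝ (Fin 2))
    (hlm : l ≠ m) (hmg : m ≠ g)
    (hdlm : ‖l - m‖ ≤ r + σ)
    (hdlg : ‖l - g‖ ≥ ρ)
    (hangle : InnerProductGeometry.angle (m - l) (g - l) ≤ φ) :
    Real.tan (InnerProductGeometry.angle (m - l) (g - m)) ≤
      ρ * Real.sin φ / (ρ * Real.cos φ - 2 * r) := by
  have hρ0 : 0 < ρ := by nlinarith
  set x := m - l with hxdef
  set y := g - l with hydef
  set z := g - m with hzdef
  have hzxy : z = y - x := by rw [hxdef, hydef, hzdef]; abel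
  set a := ‖x‖ with hadef
  set b := ‖y‖ with hbdef
  set w := ‖z‖ with hwdef
  have ha0 : 0 < a := norm_pos_iff.2 (sub_ne_zero.mpr (Ne.symm hlm))
  have hw0 : 0 < w := norm_pos_iff.2 (sub_ne_zero.mpr (Ne.symm hmg))
  have ha2 : a ≤ 2 * r := by
    have h := norm_sub_rev m l
    rw [← hxdef] at h
    rw [hadef, h]; linarith
  have hb : ρ ≤ b := by
    have h := norm_sub_rev g l
    rw [← hydef] at h
    rw [hbdef, h]; linarith
  have hb0 : 0 < b := lt_of_lt_of_le hρ0 hb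
  set q : ℝ := ⟪x, y⟫ with hqdef
  set p : ℝ := ⟪x, z⟫ with hpdef
  have hpq : p = q - a ^ 2 := by
    rw [hpdef, hzxy, inner_sub_right, real_inner_self_eq_norm_sq, hqdef]
  set c' : ℝ := Real.cos (angle x y) with hc'def
  set s' : ℝ := Real.sin (angle x y) with hs'def
  have hcφ : 0 < Real.cos φ := by nlinarith
  have hsφ : 0 ≤ Real.sin φ := Real.sin_nonneg_of_nonneg_of_le_pi hφ0.le
    (by linarith [Real.pi_pos])
  have hcc : Real.cos φ ≤ c' :=
    Real.cos_le_cos_of_nonneg_of_le_pi (angle_nonneg x y)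
      (by linarith [Real.pi_pos]) hangle
  have hc1 : c' ≤ 1 := Real.cos_le_one _
  have hs'0 : 0 ≤ s' := Real.sin_nonneg_of_nonneg_of_le_pi (angle_nonneg x y) (angle_le_pi x y)
  have hpyth' : s' ^ 2 + c' ^ 2 = 1 := by
    rw [hs'def, hc'def]; exact Real.sin_sq_add_cos_sq _
  have hpythφ : Real.sin φ ^ 2 + Real.cos φ ^ 2 = 1 := Real.sin_sq_add_cos_sq _
  have hq_eq : q = c' * (a * b) := by
    rw [hc'def, cos_angle_mul_norm_mul_norm]
  have hrad : ⟪x, x⟫ * ⟪z, z⟫ - ⟪x, z⟫ * ⟪x, z⟫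
      = ⟪x, x⟫ * ⟪y, y⟫ - ⟪x, y⟫ * ⟪x, y⟫ := by
    have hw2 : ⟪z, z⟫ = b ^ 2 - 2 * q + a ^ 2 := by
      rw [real_inner_self_eq_norm_sq, hzxy, norm_sub_sq_real, real_inner_comm x y,
        ← hqdef, ← hadef, ← hbdef]
    rw [hw2, ← hpdef, hpq, real_inner_self_eq_norm_sq, real_inner_self_eq_norm_sq,
      ← hqdef]
    ring
  have hsinθ : Real.sin (angle x z) * (a * w) = s' * (a * b) := by
    rw [sin_angle_mul_norm_mul_norm, hrad, hs'def, ← sin_angle_mul_norm_mul_norm]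
  have hcosθ : Real.cos (angle x z) * (a * w) = p := cos_angle_mul_norm_mul_norm x z
  have hpp : 0 < p := by
    rw [hpq, hq_eq]
    nlinarith [mul_le_mul_of_nonneg_left hb (mul_pos ha0 hcφ).le,
      mul_le_mul_of_nonneg_left hcc (mul_nonneg ha0.le hb0.le)]
  have hawpos : 0 < a * w := mul_pos ha0 hw0
  have hcosθ_pos : 0 < Real.cos (angle x z) := by
    nlinarith [hcosθ, hpp, hawpos]
  have hD : 0 < ρ * Real.cos φ - 2 * r := by linarith
  have key := aux_key r ρ a b (Real.cos φ) (Real.sin φ) c' s'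
    hr ha0 ha2 hb hcφ hcc hc1 hsφ hs'0 hpyth' hpythφ hφρ
  have hpval : p = c' * (a * b) - a ^ 2 := by rw [hpq, hq_eq]
  rw [Real.tan_eq_sin_div_cos, div_le_div_iff₀ hcosθ_pos hD]
  rw [← mul_le_mul_iff_of_pos_right hawpos]
  calc Real.sin (angle x z) * (ρ * Real.cos φ - 2 * r) * (a * w)
      = Real.sin (angle x z) * (a * w) * (ρ * Real.cos φ - 2 * r) := by ring
    _ = s' * (a * b) * (ρ * Real.cos φ - 2 * r) := by rw [hsinθ]
    _ ≤ ρ * Real.sin φ * (c' * (a * b) - a ^ 2) := key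
    _ = ρ * Real.sin φ * p := by rw [← hpval]
    _ = ρ * Real.sin φ * (Real.cos (angle x z) * (a * w)) := by rw [hcosθ]
    _ = ρ * Real.sin φ * Real.cos (angle x z) * (a * w) := by ring
end

section
/- Let g be a fixed point and let l : [a,b] → ℝ² be a 1-Lipschitz path with ‖l(t) − g‖ ≥ ρ for all t. If η(t) denotes a continuous angle function of the vector from l(t) to g, then for times t₁ < t₂, |η(t₂) − η(t₁)| ≤ (t₂ − t₁)/ρ. -/
open Real
open scoped RealInnerProductSpace

set_option maxHeartbeats 1000000

private lemma stmt8_stepB (y x : ℝ) (hy0 : 0 ≤ y) (hyπ : y < π/2) (hsin : Real.sin y ≤ x)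
    (hx : x^2 ≤ 1/2) : y ≤ x*(1+2*x^2) := by
  have hπ := Real.pi_pos
  have hs0 : 0 ≤ Real.sin y := Real.sin_nonneg_of_nonneg_of_le_pi hy0 (by linarith)
  have hx0 : 0 ≤ x := le_trans hs0 hsin
  have hcos : 0 < Real.cos y := Real.cos_pos_of_mem_Ioo ⟨by linarith, hyπ⟩
  have htan : y * Real.cos y ≤ Real.sin y := by
    rcases eq_or_lt_of_le hy0 with h|h
    · simp [← h]
    · have h2 := Real.lt_tan h hyπ
      rw [Real.tan_eq_sin_div_cos] at h2
      have := (lt_div_iff₀ hcos).mp h2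
      linarith
  have hcs : Real.cos y ^ 2 = 1 - Real.sin y ^ 2 := Real.cos_sq' y
  have h2 : 1 ≤ Real.cos y * (1 + 2*x^2) := by
    nlinarith [sq_nonneg (Real.cos y * (1+2*x^2) - 1), sq_nonneg x, sq_nonneg (Real.sin y)]
  nlinarith [mul_le_mul_of_nonneg_left h2 hy0]


private lemma stmt8_chord (a b ρ : ℝ) (hρ : 0 < ρ)
    (g : EuclideanSpace ℝ (Fin 2)) (l : ℝ → EuclideanSpace ℝ (Fin 2))
    (η : ℝ → ℝ)
    (hl : LipschitzOnWith 1 l (Set.Icc a b))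
    (hfar : ∀ t ∈ Set.Icc a b, ‖l t - g‖ ≥ ρ)
    (hangle : ∀ t ∈ Set.Icc a b,
      g = l t + ‖l t - g‖ •
        (WithLp.equiv 2 (Fin 2 → ℝ)).symm ![Real.cos (η t), Real.sin (η t)])
    (s : ℝ) (hs : s ∈ Set.Icc a b) (t : ℝ) (ht : t ∈ Set.Icc a b) :
    2*ρ*|Real.sin ((η t - η s)/2)| ≤ |t - s| := by
  set v : ℝ → EuclideanSpace ℝ (Fin 2) :=
    fun r => (WithLp.equiv 2 (Fin 2 → ℝ)).symm ![Real.cos (η r), Real.sin (η r)] with hv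
  have hvn : ∀ r, ‖v r‖ = 1 := by
    intro r
    rw [EuclideanSpace.norm_eq]
    simp [hv, Fin.sum_univ_two, sq_abs]

  have hvi : ∀ r w : ℝ, ⟪v r, v w⟫ = Real.cos (η r - η w) := by
    intro r w
    rw [Real.cos_sub]
    simp [hv, PiLp.inner_apply, Fin.sum_univ_two, RCLike.inner_apply, conj_trivial]; ring
  set dt := ‖l t - g‖ with hdt
  set ds := ‖l s - g‖ with hds
  have hgt : g - l t = dt • v t := by rw [hangle t ht]; abel
  have hgs : g - l s = ds • v s := by rw [hangle s hs]; abel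
  have hlst : l s - l t = dt • v t - ds • v s := by
    rw [← hgt, ← hgs]; abel
  have hnorm : ‖l s - l t‖^2 = dt^2 - 2*(dt*ds*Real.cos (η t - η s)) + ds^2 := by
    rw [hlst, norm_sub_sq_real, real_inner_smul_left, real_inner_smul_right,
      norm_smul, norm_smul, hvi, hvn, hvn]
    simp [Real.norm_eq_abs, abs_of_nonneg (norm_nonneg (l t - g)),
      abs_of_nonneg (norm_nonneg (l s - g))]
    ring
  have hlip : ‖l s - l t‖ ≤ |s - t| := by
    have := hl.dist_le_mul s hs t ht
    simpa [dist_eq_norm, Real.dist_eq] using this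
  have hdtρ : ρ ≤ dt := hfar t ht
  have hdsρ : ρ ≤ ds := hfar s hs
  have hcos : Real.cos (η t - η s) ≤ 1 := Real.cos_le_one _
  have hsin2 : Real.sin ((η t - η s)/2)^2 = (1 - Real.cos (η t - η s))/2 := by
    rw [← sq_abs, Real.abs_sin_half, Real.sq_sqrt (by nlinarith [Real.cos_le_one (η t - η s)])]
  have hkey : (2*ρ*|Real.sin ((η t - η s)/2)|)^2 ≤ |t - s|^2 := by
    have h1 : (2*ρ*|Real.sin ((η t - η s)/2)|)^2 = 4*ρ^2*((1 - Real.cos (η t - η s))/2) := by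
      rw [mul_pow, mul_pow, sq_abs, hsin2]; ring
    have h2 : 4*ρ^2*((1 - Real.cos (η t - η s))/2) ≤ ‖l s - l t‖^2 := by
      rw [hnorm]
      nlinarith [sq_nonneg (dt - ds), mul_le_mul hdtρ hdsρ (le_of_lt hρ) (le_trans (le_of_lt hρ) hdtρ)]
    have h3 : ‖l s - l t‖^2 ≤ |s - t|^2 := by
      nlinarith [norm_nonneg (l s - l t), abs_nonneg (s - t)]
    rw [abs_sub_comm t s]
    linarith [h1, h2, h3]
  nlinarith [abs_nonneg (t - s), abs_nonneg (Real.sin ((η t - η s)/2)), hkey,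
    mul_nonneg (mul_nonneg (by norm_num : (0:ℝ) ≤ 2) hρ.le) (abs_nonneg (Real.sin ((η t - η s)/2)))]


/-- If a 1-Lipschitz lion path stays at distance at least `ρ` from the goal `g`, then a
continuous angle function `η` of the vector from the lion to `g` changes by at most
`(t₂ − t₁)/ρ` between times `t₁ < t₂`. -/
theorem stmt_8 (a b ρ : ℝ) (hab : a ≤ b) (hρ : 0 < ρ)
    (g : EuclideanSpace ℝ (Fin 2)) (l : ℝ → EuclideanSpace ℝ (Fin 2))
    (η : ℝ → ℝ)
    (hl : LipschitzOnWith 1 l (Set.Icc a b))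
    (hfar : ∀ t ∈ Set.Icc a b, ‖l t - g‖ ≥ ρ)
    (hη : ContinuousOn η (Set.Icc a b))
    (hangle : ∀ t ∈ Set.Icc a b,
      g = l t + ‖l t - g‖ •
        (WithLp.equiv 2 (Fin 2 → ℝ)).symm ![Real.cos (η t), Real.sin (η t)]) :
    ∀ t₁ ∈ Set.Icc a b, ∀ t₂ ∈ Set.Icc a b, t₁ < t₂ →
      |η t₂ - η t₁| ≤ (t₂ - t₁) / ρ := by
  have hchord : ∀ s ∈ Set.Icc a b, ∀ t ∈ Set.Icc a b,
      2*ρ*|Real.sin ((η t - η s)/2)| ≤ |t - s| :=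
    fun s hs t ht => stmt8_chord a b ρ hρ g l η hl hfar hangle s hs t ht
  have hstepB : ∀ y x : ℝ, 0 ≤ y → y < π/2 → Real.sin y ≤ x → x^2 ≤ 1/2 →
      y ≤ x*(1+2*x^2) := stmt8_stepB
  intro t₁ h₁ t₂ h₂ hlt
  have hπ := Real.pi_pos
  set T := t₂ - t₁ with hTdef
  have hT : 0 < T := sub_pos.mpr hlt
  obtain ⟨δ, hδ0, hδ⟩ : ∃ δ > 0, ∀ x ∈ Set.Icc a b, ∀ y ∈ Set.Icc a b,
      dist x y < δ → dist (η x) (η y) < π := by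
    have hc := isCompact_Icc.uniformContinuousOn_of_continuous hη
    exact Metric.uniformContinuousOn_iff.mp hc π Real.pi_pos
  by_contra hcon
  push_neg at hcon
  set ε := |η t₂ - η t₁| - T/ρ with hεdef
  have hε : 0 < ε := sub_pos.mpr hcon
  obtain ⟨n, hn⟩ := exists_nat_gt (max (T/δ) (max (T/ρ) (T^3/(2*ρ^3*ε))))
  have hnρ : T/ρ < (n:ℝ) := lt_of_le_of_lt (le_trans (le_max_left _ _) (le_max_right _ _)) hn
  have hn0 : 0 < (n:ℝ) := lt_trans (by positivity) hnρ
  have hn1 : 1 ≤ (n:ℝ) := by exact_mod_cast Nat.one_le_iff_ne_zero.mpr (by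
    intro h; rw [h] at hn0; simp at hn0)
  have hnδ : T/δ < (n:ℝ) := lt_of_le_of_lt (le_max_left _ _) hn
  have hnε : T^3/(2*ρ^3*ε) < (n:ℝ) :=
    lt_of_le_of_lt (le_trans (le_max_right _ _) (le_max_right _ _)) hn
  set h := T / n with hhdef
  have hh0 : 0 < h := div_pos hT hn0
  have hhδ : h < δ := by
    rw [div_lt_iff₀ hδ0] at hnδ
    rw [hhdef, div_lt_iff₀ hn0]
    linarith
  set x := h/(2*ρ) with hxdef
  have hx0 : 0 < x := by positivity
  have hxeq : 2*ρ*((n:ℝ)*x) = T := by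
    rw [hxdef, hhdef]; field_simp
  have hxhalf : x ≤ 1/2 := by
    rw [div_lt_iff₀ hρ] at hnρ
    nlinarith
  have hx2 : x^2 ≤ 1/2 := by nlinarith
  -- per-step bound
  set K := 2*(x*(1+2*x^2)) with hKdef
  have hstep : ∀ s ∈ Set.Icc a b, ∀ t ∈ Set.Icc a b, |t - s| ≤ h → |η t - η s| ≤ K := by
    intro s hs t ht hts
    have hch := hchord s hs t ht
    have hsinx : |Real.sin ((η t - η s)/2)| ≤ x := by
      rw [hxdef, le_div_iff₀ (by positivity : (0:ℝ) < 2*ρ)]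
      nlinarith
    have hΔπ : |η t - η s| < π := by
      have hd : dist s t < δ := by
        rw [Real.dist_eq, abs_sub_comm]; exact lt_of_le_of_lt hts hhδ
      have := hδ s hs t ht hd
      rw [Real.dist_eq, abs_sub_comm] at this
      exact this
    have hy0 : 0 ≤ |η t - η s|/2 := by positivity
    have hyπ : |η t - η s|/2 < π/2 := by linarith
    have hsiny : Real.sin (|η t - η s|/2) ≤ x := by
      rcases abs_cases (η t - η s) with ⟨he, _⟩|⟨he, _⟩
      · rw [he]
        exact le_trans (le_abs_self _) hsinx
      · rw [he]
        have : -(η t - η s)/2 = -((η t - η s)/2) := by ring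
        rw [this, Real.sin_neg]
        exact le_trans (neg_le_abs _) hsinx
    have hB := hstepB (|η t - η s|/2) x hy0 hyπ hsiny hx2
    rw [hKdef]; linarith
  -- partition
  have hmem : ∀ i : ℕ, i ≤ n → t₁ + i*h ∈ Set.Icc a b := by
    intro i hi
    have hnh : (n:ℝ)*h = T := by rw [hhdef]; field_simp
    have hih : (i:ℝ)*h ≤ T := by
      rw [← hnh]
      have : (i:ℝ) ≤ n := Nat.cast_le.mpr hi
      nlinarith
    constructor
    · have : 0 ≤ (i:ℝ)*h := by positivity
      linarith [h₁.1]
    · have : t₁ + (i:ℝ)*h ≤ t₂ := by rw [hTdef] at hih; linarith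
      linarith [h₂.2]
  have hind : ∀ i : ℕ, i ≤ n → |η (t₁ + i*h) - η t₁| ≤ i*K := by
    intro i
    induction i with
    | zero => intro _; simp
    | succ i ih =>
      intro hi
      have hi' : i ≤ n := Nat.le_of_succ_le hi
      have hA := ih hi'
      have hB : |η (t₁ + (i+1:ℕ)*h) - η (t₁ + i*h)| ≤ K := by
        apply hstep _ (hmem i hi') _ (hmem (i+1) hi)
        have he : t₁ + ((i+1:ℕ):ℝ)*h - (t₁ + (i:ℝ)*h) = h := by push_cast; ring
        rw [he, abs_of_pos hh0]
      calc |η (t₁ + (i+1:ℕ)*h) - η t₁|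
          ≤ |η (t₁ + (i+1:ℕ)*h) - η (t₁ + i*h)| + |η (t₁ + i*h) - η t₁| :=
            abs_sub_le _ _ _
        _ ≤ K + i*K := add_le_add hB hA
        _ = (i+1:ℕ)*K := by push_cast; ring
  have hfin : t₁ + (n:ℝ)*h = t₂ := by
    rw [hhdef]; field_simp; rw [hTdef]; ring
  have hmain : |η t₂ - η t₁| ≤ (n:ℝ)*K := by
    have := hind n le_rfl
    rwa [hfin] at this
  -- final arithmetic
  set u := (n:ℝ)*x with hudef
  have hu0 : 0 < u := by positivity
  have hu : 2*ρ*u = T := hxeq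
  have hnK : (n:ℝ)*K = 2*u + 4*u*x^2 := by rw [hKdef, hudef]; ring
  have h2u : 2*u = T/ρ := by rw [eq_div_iff hρ.ne']; linarith
  have hT3 : T^3 < 2*ρ^3*ε*(n:ℝ) := by
    rw [div_lt_iff₀ (by positivity)] at hnε
    linarith
  have hT3eq : T^3 = 8*ρ^3*u^3 := by rw [← hu]; ring
  have h4u3 : 4*u^3 < ε*(n:ℝ) := by nlinarith [pow_pos hρ 3]
  have hx2n : x^2*(n:ℝ)^2 = u^2 := by rw [hudef]; ring
  have hlast : 4*u*x^2 < ε := by nlinarith [sq_nonneg ((n:ℝ) - 1), mul_pos hn0 hn0]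
  have : |η t₂ - η t₁| = T/ρ + ε := by rw [hεdef]; ring
  rw [this] at hmain
  rw [hnK, h2u] at hmain
  clear_value T ε h x K u
  linarith
end
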